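/- Fix A ∈ ℝ^{p×(p+m)L} and B ∈ ℝ^{p×m}. A pair (P,K) with P ≻ 0 ∈ S^{(p+m)L} and K ∈ ℝ^{m×(p+m)L} satisfies P − (𝐀(A)+𝐁(B)K)P(𝐀(A)+𝐁(B)K)ᵀ ≻ 0 if and only if, writing P = [[P₁₁,P₁₂],[P₁₂ᵀ,P₂₂]] with P₁₁ ∈ S^p and P₂₂ ∈ S^{(p+m)L−p}, J_K := J₁+J₂K, and Z := P₂₂ − J_K P J_Kᵀ, the following two conditions hold: Z ≻ 0, and [I_p; [A B]ᵀ]ᵀ M_AR [I_p; [A B]ᵀ] ≻ 0, where, with S := [I_{(p+m)L}; K] ∈ ℝ^{((p+m)L+m)×(p+m)L}, M_AR := [[P₁₁, 0],[0, −S P Sᵀ]] − [P₁₂; −S P J_Kᵀ] Z^{-1} [P₁₂; −S P J_Kᵀ]ᵀ ∈ S^{p+(p+m)L+m} and [P₁₂; −S P J_Kᵀ] denotes the vertical stacking of P₁₂ on top of −S P J_Kᵀ. -/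

import Mathlib

open Matrix

noncomputable section

/-- Moore–Penrose pseudoinverse of a real square matrix, defined via classical choice
(the Moore–Penrose inverse exists and is unique for real matrices). -/
def pinv {k : Type*} [Fintype k] (A : Matrix k k ℝ) : Matrix k k ℝ := by
  classical
  exact if h : ∃ B : Matrix k k ℝ,
      A * B * A = A ∧ B * A * B = B ∧ (A * B)ᵀ = A * B ∧ (B * A)ᵀ = B * A
    then h.choose else 0

/-- Positive semidefinite square root of a real matrix (junk value `0` if not PSD). -/
def msqrt {k : Type*} [Fintype k] [DecidableEq k] (A : Matrix k k ℝ) : Matrix k k ℝ := by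
  classical
  exact if h : A.PosSemidef then
    (h.1.eigenvectorUnitary : Matrix k k ℝ) * diagonal (fun i => √(h.1.eigenvalues i)) *
      (star h.1.eigenvectorUnitary : Matrix k k ℝ) else 0

/-- `Z_{q,r}(N) = { Z : [I; Z]ᵀ N [I; Z] ⪰ 0 }`. -/
def ZSet {q r : Type*} [Fintype q] [Fintype r] [DecidableEq q]
    (N : Matrix (q ⊕ r) (q ⊕ r) ℝ) : Set (Matrix r q ℝ) :=
  {Z | ((fromRows (1 : Matrix q q ℝ) Z)ᵀ * N * fromRows (1 : Matrix q q ℝ) Z).PosSemidef}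

/-- `Z⁺_{q,r}(N) = { Z : [I; Z]ᵀ N [I; Z] ≻ 0 }`. -/
def ZSetP {q r : Type*} [Fintype q] [Fintype r] [DecidableEq q]
    (N : Matrix (q ⊕ r) (q ⊕ r) ℝ) : Set (Matrix r q ℝ) :=
  {Z | ((fromRows (1 : Matrix q q ℝ) Z)ᵀ * N * fromRows (1 : Matrix q q ℝ) Z).PosDef}

/-- `Π_{q,r}`: symmetric matrices `N` with `N₂₂ ⪯ 0`, `ker N₂₂ ⊆ ker N₁₂` and
`N₁₁ - N₁₂ N₂₂† N₁₂ᵀ ⪰ 0`. -/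
def PiSet (q r : Type*) [Fintype q] [Fintype r] : Set (Matrix (q ⊕ r) (q ⊕ r) ℝ) :=
  {N | N.IsSymm ∧ (-(N.toBlocks₂₂)).PosSemidef ∧
      (∀ x : r → ℝ, N.toBlocks₂₂ *ᵥ x = 0 → N.toBlocks₁₂ *ᵥ x = 0) ∧
      (N.toBlocks₁₁ - N.toBlocks₁₂ * pinv N.toBlocks₂₂ * (N.toBlocks₁₂)ᵀ).PosSemidef}

/-- State index type for the AR model: `(p+m)L` coordinates, split as the first `p`
(which carry `y(t-1)`) and the remaining `(p+m)L - p`. -/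
abbrev ARSt (p m L : ℕ) := Fin p ⊕ Fin ((p + m) * L - p)

/-- Row index type of the stacked AR data matrix `[Yᵀ, -Xᵀ, -Uᵀ]ᵀ`. -/
abbrev ARRows (p m L : ℕ) := Fin p ⊕ (ARSt p m L ⊕ Fin m)

/-- `[I_p A B]`. -/
def arSysRow {p m L : ℕ} (A : Matrix (Fin p) (ARSt p m L) ℝ) (B : Matrix (Fin p) (Fin m) ℝ) :
    Matrix (Fin p) (ARRows p m L) ℝ :=
  fromCols (1 : Matrix (Fin p) (Fin p) ℝ) (fromCols A B)

/-- `𝐗 = [Yᵀ, -Xᵀ, -Uᵀ]ᵀ`. -/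
def arBigX {p m L T : ℕ} (Y : Matrix (Fin p) (Fin T) ℝ) (X : Matrix (ARSt p m L) (Fin T) ℝ)
    (U : Matrix (Fin m) (Fin T) ℝ) : Matrix (ARRows p m L) (Fin T) ℝ :=
  fromRows Y (fromRows (-X) (-U))

/-- `𝒟` for the AR model. -/
def arDset {p m L T nh : ℕ} (E : Matrix (ARRows p m L) (Fin nh) ℝ)
    (Φ : Matrix (Fin nh ⊕ Fin T) (Fin nh ⊕ Fin T) ℝ) :
    Set (Matrix (ARRows p m L) (Fin T) ℝ) :=
  {Δ | ∃ Δh : Matrix (Fin nh) (Fin T) ℝ, Δhᵀ ∈ ZSet Φ ∧ Δ = E * Δh}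

/-- `Σ` for the AR model. -/
def arSigma {p m L T nh : ℕ} (Y : Matrix (Fin p) (Fin T) ℝ) (X : Matrix (ARSt p m L) (Fin T) ℝ)
    (U : Matrix (Fin m) (Fin T) ℝ) (E : Matrix (ARRows p m L) (Fin nh) ℝ)
    (Φ : Matrix (Fin nh ⊕ Fin T) (Fin nh ⊕ Fin T) ℝ) :
    Set (Matrix (Fin p) (ARSt p m L) ℝ × Matrix (Fin p) (Fin m) ℝ) :=
  {AB | ∃ Δ' ∈ arDset E Φ, arSysRow AB.1 AB.2 * arBigX Y X U = arSysRow AB.1 AB.2 * Δ'}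

/-- `N = [E 𝐗] Φ̂ [E 𝐗]ᵀ` for the AR model. -/
def arN {p m L T nh : ℕ} (Y : Matrix (Fin p) (Fin T) ℝ) (X : Matrix (ARSt p m L) (Fin T) ℝ)
    (U : Matrix (Fin m) (Fin T) ℝ) (E : Matrix (ARRows p m L) (Fin nh) ℝ)
    (Φ : Matrix (Fin nh ⊕ Fin T) (Fin nh ⊕ Fin T) ℝ) :
    Matrix (ARRows p m L) (ARRows p m L) ℝ :=
  fromCols E (arBigX Y X U) * Φ * (fromCols E (arBigX Y X U))ᵀ

/-- `Σ_R` for the AR model. -/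
def arSigmaR {p m L T nh : ℕ} (Y : Matrix (Fin p) (Fin T) ℝ) (X : Matrix (ARSt p m L) (Fin T) ℝ)
    (U : Matrix (Fin m) (Fin T) ℝ) (E : Matrix (ARRows p m L) (Fin nh) ℝ)
    (Φ : Matrix (Fin nh ⊕ Fin T) (Fin nh ⊕ Fin T) ℝ) :
    Set (Matrix (Fin p) (ARSt p m L) ℝ × Matrix (Fin p) (Fin m) ℝ) :=
  {AB | (fromCols AB.1 AB.2)ᵀ ∈ ZSet (arN Y X U E Φ)}

/-- `[I_p; 0]` used in the image condition. -/
def arIota (p m L : ℕ) : Matrix (ARRows p m L) (Fin p) ℝ :=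
  fromRows (1 : Matrix (Fin p) (Fin p) ℝ) (0 : Matrix (ARSt p m L ⊕ Fin m) (Fin p) ℝ)

/-- Flat coordinate index of the AR state. -/
def colIdx {p k : ℕ} : Fin p ⊕ Fin k → ℕ :=
  Sum.elim (fun a => (a : ℕ)) (fun b => p + (b : ℕ))

/-- `J₁`: the shift matrix with block rows `(p(L-1), m, m(L-1))` and block columns
`(p(L-1), p, m(L-1), m)` given by `[[I,0,0,0],[0,0,0,0],[0,0,I,0]]`. -/
def J1mat (p m L : ℕ) : Matrix (Fin ((p + m) * L - p)) (ARSt p m L) ℝ :=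
  Matrix.of fun i c =>
    if (i : ℕ) < p * (L - 1) ∧ colIdx c = (i : ℕ) then 1
    else if p * (L - 1) + m ≤ (i : ℕ) ∧ colIdx c = p * L + ((i : ℕ) - (p * (L - 1) + m)) then 1
    else 0

/-- `J₂ = [0; I_m; 0]` with block heights `(p(L-1), m, m(L-1))`. -/
def J2mat (p m L : ℕ) : Matrix (Fin ((p + m) * L - p)) (Fin m) ℝ :=
  Matrix.of fun i j => if (i : ℕ) = p * (L - 1) + (j : ℕ) then 1 else 0

/-- `𝐀(A) = [A; J₁]`. -/
def bbA {p m L : ℕ} (A : Matrix (Fin p) (ARSt p m L) ℝ) :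
    Matrix (ARSt p m L) (ARSt p m L) ℝ :=
  fromRows A (J1mat p m L)

/-- `𝐁(B) = [B; J₂]`. -/
def bbB {p m L : ℕ} (B : Matrix (Fin p) (Fin m) ℝ) :
    Matrix (ARSt p m L) (Fin m) ℝ :=
  fromRows B (J2mat p m L)

/-- `M_AR` of Lemma 5. -/
def MAR (p m L : ℕ) (P : Matrix (ARSt p m L) (ARSt p m L) ℝ)
    (K : Matrix (Fin m) (ARSt p m L) ℝ) :
    Matrix (ARRows p m L) (ARRows p m L) ℝ :=
  let S : Matrix (ARSt p m L ⊕ Fin m) (ARSt p m L) ℝ :=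
    fromRows (1 : Matrix (ARSt p m L) (ARSt p m L) ℝ) K
  let JK := J1mat p m L + J2mat p m L * K
  let Z := P.toBlocks₂₂ - JK * P * JKᵀ
  fromBlocks P.toBlocks₁₁ 0 0 (-(S * P * Sᵀ)) -
    fromRows P.toBlocks₁₂ (-(S * P * JKᵀ)) * Z⁻¹ *
      (fromRows P.toBlocks₁₂ (-(S * P * JKᵀ)))ᵀ

section AuxSchur

variable {m' n' : Type*} [Fintype m'] [Fintype n']

lemma aux_fromRows_add {q : Type*} (A₁ B₁ : Matrix m' q ℝ) (A₂ B₂ : Matrix n' q ℝ) :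
    fromRows A₁ A₂ + fromRows B₁ B₂ = fromRows (A₁ + B₁) (A₂ + B₂) := by
  ext (i | i) j <;> rfl

lemma aux_sub_fromBlocks {R : Type*} [Sub R] (M : Matrix (m' ⊕ n') (m' ⊕ n') R)
    (A : Matrix m' m' R) (B : Matrix m' n' R) (C : Matrix n' m' R) (D : Matrix n' n' R) :
    M - fromBlocks A B C D = fromBlocks (M.toBlocks₁₁ - A) (M.toBlocks₁₂ - B)
      (M.toBlocks₂₁ - C) (M.toBlocks₂₂ - D) := by
  ext (i | i) (j | j) <;>
    simp [fromBlocks, toBlocks₁₁, toBlocks₁₂, toBlocks₂₁, toBlocks₂₂]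

lemma aux_posDef_toBlocks₂₂ {M : Matrix (m' ⊕ n') (m' ⊕ n') ℝ} (hM : M.PosDef) :
    M.toBlocks₂₂.PosDef := by
  have hsym := hM.1
  rw [← fromBlocks_toBlocks M, isHermitian_fromBlocks_iff] at hsym
  refine PosDef.of_dotProduct_mulVec_pos hsym.2.2.2 (fun y hy => ?_)
  have hne : Sum.elim (0 : m' → ℝ) y ≠ 0 := by
    intro h0
    exact hy (funext fun i => congrFun h0 (Sum.inr i))
  have h2 := hM.dotProduct_mulVec_pos hne
  rw [← fromBlocks_toBlocks M, fromBlocks_mulVec] at h2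
  simpa [sumElim_dotProduct_sumElim] using h2

lemma aux_posDef_fromBlocks₂₂ [DecidableEq n'] (A : Matrix m' m' ℝ) (B : Matrix m' n' ℝ)
    {D : Matrix n' n' ℝ} (hD : D.PosDef) :
    (fromBlocks A B Bᵀ D).PosDef ↔ (A - B * D⁻¹ * Bᵀ).PosDef := by
  haveI := hD.isUnit.invertible
  have hBt : Bᵀ = Bᴴ := (conjTranspose_eq_transpose_of_trivial B).symm
  have hherm : (fromBlocks A B Bᵀ D).IsHermitian ↔ (A - B * D⁻¹ * Bᵀ).IsHermitian := by
    rw [hBt]; exact IsHermitian.fromBlocks₂₂ A B hD.1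
  constructor
  · intro h
    refine PosDef.of_dotProduct_mulVec_pos (hherm.mp h.1) (fun x hx => ?_)
    have hne : Sum.elim x (-((D⁻¹ * Bᴴ) *ᵥ x)) ≠ 0 := by
      intro h0
      exact hx (funext fun i => congrFun h0 (Sum.inl i))
    have h2 := h.dotProduct_mulVec_pos hne
    rw [dotProduct_mulVec, hBt, schur_complement_eq₂₂ A B x _ hD.1] at h2
    rw [add_neg_cancel] at h2
    simpa [dotProduct_mulVec, ← hBt] using h2
  · intro h
    refine PosDef.of_dotProduct_mulVec_pos (hherm.mpr h.1) (fun z hz => ?_)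
    rw [dotProduct_mulVec, ← Sum.elim_comp_inl_inr z, hBt,
      schur_complement_eq₂₂ A B _ _ hD.1, ← hBt]
    by_cases hx : z ∘ Sum.inl = 0
    · have hy : z ∘ Sum.inr ≠ 0 := by
        intro h0
        apply hz
        rw [← Sum.elim_comp_inl_inr z, hx, h0]
        ext (i | i) <;> rfl
      have hw : (D⁻¹ * Bᴴ) *ᵥ (z ∘ Sum.inl) + z ∘ Sum.inr ≠ 0 := by
        rw [hx, mulVec_zero, zero_add]; exact hy
      have h1 : 0 < star ((D⁻¹ * Bᴴ) *ᵥ (z ∘ Sum.inl) + z ∘ Sum.inr) ᵥ* D ⬝ᵥ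
          ((D⁻¹ * Bᴴ) *ᵥ (z ∘ Sum.inl) + z ∘ Sum.inr) := by
        rw [← dotProduct_mulVec]; exact hD.dotProduct_mulVec_pos hw
      have h2 : star (z ∘ Sum.inl) ᵥ* (A - B * D⁻¹ * Bᵀ) ⬝ᵥ (z ∘ Sum.inl) = 0 := by
        rw [hx]; simp
      rw [h2, add_zero]; exact h1
    · have h1 : 0 ≤ star ((D⁻¹ * Bᴴ) *ᵥ (z ∘ Sum.inl) + z ∘ Sum.inr) ᵥ* D ⬝ᵥ
          ((D⁻¹ * Bᴴ) *ᵥ (z ∘ Sum.inl) + z ∘ Sum.inr) := by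
        rw [← dotProduct_mulVec]; exact (posSemidef_iff_dotProduct_mulVec.mp hD.posSemidef).2 _
      have h2 : 0 < star (z ∘ Sum.inl) ᵥ* (A - B * D⁻¹ * Bᵀ) ⬝ᵥ (z ∘ Sum.inl) := by
        rw [← dotProduct_mulVec]; exact h.dotProduct_mulVec_pos hx
      exact add_pos_of_nonneg_of_pos h1 h2

end AuxSchur

theorem stmt12 {p m L : ℕ} (hp : 0 < p) (hm : 0 < m) (hL : 0 < L)
    (A : Matrix (Fin p) (ARSt p m L) ℝ) (B : Matrix (Fin p) (Fin m) ℝ)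
    (P : Matrix (ARSt p m L) (ARSt p m L) ℝ) (K : Matrix (Fin m) (ARSt p m L) ℝ)
    (hP : P.PosDef) :
    (P - (bbA A + bbB B * K) * P * (bbA A + bbB B * K)ᵀ).PosDef ↔
      ((P.toBlocks₂₂ - (J1mat p m L + J2mat p m L * K) * P *
          (J1mat p m L + J2mat p m L * K)ᵀ).PosDef ∧
       ((fromRows (1 : Matrix (Fin p) (Fin p) ℝ) (fromCols A B)ᵀ)ᵀ *
          MAR p m L P K *
          fromRows (1 : Matrix (Fin p) (Fin p) ℝ) (fromCols A B)ᵀ).PosDef) := by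
  classical
  set C := fromCols A B with hC
  set X := A + B * K with hX
  set JK := J1mat p m L + J2mat p m L * K with hJK
  set S : Matrix (ARSt p m L ⊕ Fin m) (ARSt p m L) ℝ := fromRows 1 K with hS
  set Z := P.toBlocks₂₂ - JK * P * JKᵀ with hZ
  set V := fromRows P.toBlocks₁₂ (-(S * P * JKᵀ)) with hV
  set G := fromRows (1 : Matrix (Fin p) (Fin p) ℝ) Cᵀ with hG
  have hPt : Pᵀ = P := by
    rw [← conjTranspose_eq_transpose_of_trivial]; exact hP.1
  have hsym := hP.1
  rw [← fromBlocks_toBlocks P, isHermitian_fromBlocks_iff] at hsym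
  have hP21 : P.toBlocks₂₁ = (P.toBlocks₁₂)ᵀ := by
    rw [← hsym.2.2.1, conjTranspose_eq_transpose_of_trivial, transpose_transpose]
  have hA1 : bbA A + bbB B * K = fromRows X JK := by
    rw [bbA, bbB, fromRows_mul, aux_fromRows_add]
  have hblock : P.toBlocks₂₁ - JK * P * Xᵀ = (P.toBlocks₁₂ - X * P * JKᵀ)ᵀ := by
    rw [transpose_sub, transpose_mul, transpose_mul, transpose_transpose, hPt, hP21,
      Matrix.mul_assoc]
  have key2 : P - (bbA A + bbB B * K) * P * (bbA A + bbB B * K)ᵀ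
      = fromBlocks (P.toBlocks₁₁ - X * P * Xᵀ) (P.toBlocks₁₂ - X * P * JKᵀ)
          ((P.toBlocks₁₂ - X * P * JKᵀ)ᵀ) Z := by
    rw [hA1, transpose_fromRows, fromRows_mul, fromRows_mul_fromCols, aux_sub_fromBlocks,
      hblock]
  have hGt : Gᵀ = fromCols (1 : Matrix (Fin p) (Fin p) ℝ) C := by
    rw [hG, transpose_fromRows, transpose_one, transpose_transpose]
  have hCS : C * S = X := by
    rw [hC, hS, fromCols_mul_fromRows, Matrix.mul_one]
  have hGV : fromCols (1 : Matrix (Fin p) (Fin p) ℝ) C * V = P.toBlocks₁₂ - X * P * JKᵀ := by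
    rw [hV, fromCols_mul_fromRows, Matrix.one_mul, Matrix.mul_neg, ← sub_eq_add_neg, ← hCS]
    simp only [Matrix.mul_assoc]
  have hCcT : (fromCols (1 : Matrix (Fin p) (Fin p) ℝ) C)ᵀ = G := by
    rw [transpose_fromCols, transpose_one, hG]
  have e1 : fromCols (1 : Matrix (Fin p) (Fin p) ℝ) C * fromBlocks P.toBlocks₁₁ 0 0 (-(S * P * Sᵀ)) * G
      = P.toBlocks₁₁ - X * P * Xᵀ := by
    rw [fromCols_mul_fromBlocks]
    simp only [Matrix.mul_zero, Matrix.one_mul, add_zero, zero_add, Matrix.mul_neg]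
    rw [hG, fromCols_mul_fromRows, Matrix.mul_one, Matrix.neg_mul, ← sub_eq_add_neg, ← hCS]
    simp only [transpose_mul, Matrix.mul_assoc]
  have e2 : fromCols (1 : Matrix (Fin p) (Fin p) ℝ) C * (V * Z⁻¹ * Vᵀ) * G
      = (P.toBlocks₁₂ - X * P * JKᵀ) * Z⁻¹ * (P.toBlocks₁₂ - X * P * JKᵀ)ᵀ := by
    rw [← hGV, transpose_mul, hCcT]
    simp only [Matrix.mul_assoc]
  have key : Gᵀ * MAR p m L P K * G
      = (P.toBlocks₁₁ - X * P * Xᵀ) - (P.toBlocks₁₂ - X * P * JKᵀ) * Z⁻¹ *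
          (P.toBlocks₁₂ - X * P * JKᵀ)ᵀ := by
    have hMARdef : MAR p m L P K
        = fromBlocks P.toBlocks₁₁ 0 0 (-(S * P * Sᵀ)) - V * Z⁻¹ * Vᵀ := rfl
    rw [hMARdef, Matrix.mul_sub, Matrix.sub_mul, hGt, e1, e2]
  rw [key2]
  constructor
  · intro h
    have hZp : Z.PosDef := by
      have h2 := aux_posDef_toBlocks₂₂ h
      simpa [toBlocks_fromBlocks₂₂] using h2
    exact ⟨hZp, by rw [key]; exact (aux_posDef_fromBlocks₂₂ _ _ hZp).mp h⟩
  · rintro ⟨hZp, hS2⟩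
    rw [key] at hS2
    exact (aux_posDef_fromBlocks₂₂ _ _ hZp).mpr hS2

end
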